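/- Let f be an unbounded modulus with a constant c > 0 such that f(xy) ≥ c·f(x)·f(y) for all x,y ≥ 0, and let λ, μ ∈ Λ with λ_n ≤ μ_n for all n ≥ n_0 and liminf_{n→∞} f(λ_n)/f(μ_n) > 0. If a real sequence (x_t) is strongly f_μ-summable to L, i.e. lim_n (1/f(μ_n)) Σ_{t∈J_n} f(|x_t − L|) = 0, then (x_t) is f_λ-statistically convergent to L. -/

import Mathlib

/-! For ξ > 0 let k_n be the number of t ∈ I_n with |x_t − L| ≥ ξ. Since λ_n ≤ μ_n we have I_n ⊆ J_n,
and each of these k_n indices contributes at least f(ξ) to Σ_{t∈J_n} f(|x_t − L|), so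
k_n f(ξ) ≤ Σ. Subadditivity gives f(k_n) ≤ k_n f(1), and the liminf hypothesis gives
f(λ_n) ≥ δ f(μ_n) eventually, hence f(k_n)/f(λ_n) ≤ f(1)/(δ f(ξ)) · Σ/f(μ_n) → 0. -/

open Filter Finset Topology
open scoped Classical

def IsModulus (f : ℝ → ℝ) : Prop :=
  (∀ x, 0 ≤ x → 0 ≤ f x) ∧
  (∀ x, 0 ≤ x → (f x = 0 ↔ x = 0)) ∧
  (∀ x, 0 ≤ x → ∀ y, 0 ≤ y → f (x + y) ≤ f x + f y) ∧
  (∀ x y, 0 ≤ x → x ≤ y → f x ≤ f y) ∧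
  ContinuousWithinAt f (Set.Ici 0) 0

def IsUnboundedModulus (f : ℝ → ℝ) : Prop :=
  IsModulus f ∧ ∀ M : ℝ, ∃ x, 0 ≤ x ∧ M < f x

def MemLambda (l : ℕ → ℝ) : Prop :=
  l 1 = 1 ∧ Monotone l ∧ (∀ n, l (n + 1) ≤ l n + 1) ∧ (∀ n, 0 < l n) ∧
  Tendsto l atTop atTop

noncomputable def Iseg (l : ℕ → ℝ) (n : ℕ) : Finset ℕ :=
  (Finset.Icc 1 n).filter (fun t => (n : ℝ) - l n + 1 ≤ (t : ℝ))

def FLStatConv {X : Type*} [NormedAddCommGroup X] (f : ℝ → ℝ) (l : ℕ → ℝ)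
    (x : ℕ → X) (L : X) : Prop :=
  ∀ ξ : ℝ, 0 < ξ →
    Tendsto (fun n => f (((Iseg l n).filter (fun t => ξ ≤ ‖x t - L‖)).card) / f (l n))
      atTop (nhds 0)

def FLDensityZero (f : ℝ → ℝ) (l : ℕ → ℝ) (T : Set ℕ) : Prop :=
  Tendsto (fun n => f (((Iseg l n).filter (fun t => t ∈ T)).card) / f (l n))
    atTop (nhds 0)

def FStatConv {X : Type*} [NormedAddCommGroup X] (f : ℝ → ℝ)
    (x : ℕ → X) (L : X) : Prop :=
  ∀ ξ : ℝ, 0 < ξ →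
    Tendsto (fun u => f (((Finset.Icc 1 u).filter (fun t => ξ ≤ ‖x t - L‖)).card) / f (u : ℝ))
      atTop (nhds 0)

lemma MemLambda.pos {l : ℕ → ℝ} (hl : MemLambda l) (n : ℕ) : 0 < l n := hl.2.2.2.1 n

lemma Iseg_subset_of_le {l m : ℕ → ℝ} {n : ℕ} (h : l n ≤ m n) : Iseg l n ⊆ Iseg m n := by
  intro t ht
  simp only [Iseg, mem_filter] at ht ⊢
  exact ⟨ht.1, by linarith [ht.2]⟩

lemma exists_pos_eventually_mul_le_of_liminf_div_pos {α : Type*} {F : Filter α} {u v : α → ℝ}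
    (hu : ∀ a, 0 ≤ u a) (hv : ∀ a, 0 < v a) (h : 0 < F.liminf fun a => u a / v a) :
    ∃ δ > 0, ∀ᶠ a in F, δ * v a ≤ u a := by
  have hbdd : F.IsBoundedUnder (· ≥ ·) fun a => u a / v a :=
    isBoundedUnder_of ⟨0, fun a => div_nonneg (hu a) (hv a).le⟩
  refine ⟨_, half_pos h, (eventually_lt_of_lt_liminf (half_lt_self h) hbdd).mono fun a ha => ?_⟩
  exact ((lt_div_iff₀ (hv a)).mp ha).le

namespace IsModulus

variable {f : ℝ → ℝ} (hf : IsModulus f)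
include hf

lemma nonneg {x : ℝ} (hx : 0 ≤ x) : 0 ≤ f x := hf.1 x hx

lemma pos {x : ℝ} (hx : 0 < x) : 0 < f x :=
  (hf.nonneg hx.le).lt_of_ne fun h => hx.ne' ((hf.2.1 x hx.le).mp h.symm)

lemma mono {x y : ℝ} (hx : 0 ≤ x) (hxy : x ≤ y) : f x ≤ f y := hf.2.2.2.1 x y hx hxy

lemma natCast_le (k : ℕ) : f k ≤ k * f 1 := by
  induction k with
  | zero => simp [(hf.2.1 0 le_rfl).mpr rfl]
  | succ k ih =>
    push_cast
    linarith [hf.2.2.1 k k.cast_nonneg 1 zero_le_one]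

lemma card_filter_mul_le_sum {ι : Type*} (s : Finset ι) (g : ι → ℝ) {ξ : ℝ} (hξ : 0 ≤ ξ) :
    #(s.filter fun t => ξ ≤ |g t|) * f ξ ≤ ∑ t ∈ s, f |g t| := by
  rw [← nsmul_eq_mul, ← sum_const]
  calc ∑ _ ∈ s.filter fun t => ξ ≤ |g t|, f ξ
      ≤ ∑ t ∈ s.filter fun t => ξ ≤ |g t|, f |g t| :=
        sum_le_sum fun t ht => hf.mono hξ (mem_filter.mp ht).2
    _ ≤ ∑ t ∈ s, f |g t| :=
        sum_le_sum_of_subset_of_nonneg (filter_subset _ _) fun t _ _ => hf.nonneg (abs_nonneg _)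

lemma apply_card_filter_le_sum {ι : Type*} (s : Finset ι) (g : ι → ℝ) {ξ : ℝ} (hξ : 0 < ξ) :
    f #(s.filter fun t => ξ ≤ |g t|) ≤ f 1 / f ξ * ∑ t ∈ s, f |g t| := by
  calc f #(s.filter fun t => ξ ≤ |g t|) ≤ #(s.filter fun t => ξ ≤ |g t|) * f 1 := hf.natCast_le _
    _ ≤ (∑ t ∈ s, f |g t|) / f ξ * f 1 := by
        gcongr
        · exact (hf.pos one_pos).le
        · exact (le_div_iff₀ (hf.pos hξ)).mpr (hf.card_filter_mul_le_sum s g hξ.le)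
    _ = f 1 / f ξ * ∑ t ∈ s, f |g t| := by ring

lemma apply_card_filter_div_le {ι : Type*} {s s' : Finset ι} (hs : s ⊆ s') (g : ι → ℝ) {ξ : ℝ}
    (hξ : 0 < ξ) {p q δ : ℝ} (hδ : 0 < δ) (hq : 0 < q) (hpq : δ * q ≤ p) :
    f #(s.filter fun t => ξ ≤ |g t|) / p ≤ f 1 / (f ξ * δ) * (1 / q * ∑ t ∈ s', f |g t|) := by
  have hcard : f #(s.filter fun t => ξ ≤ |g t|) ≤ f #(s'.filter fun t => ξ ≤ |g t|) :=
    hf.mono (Nat.cast_nonneg _) (by exact_mod_cast card_le_card (filter_subset_filter _ hs))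
  calc f #(s.filter fun t => ξ ≤ |g t|) / p
      ≤ (f 1 / f ξ * ∑ t ∈ s', f |g t|) / (δ * q) := by
        refine div_le_div₀ ?_ (hcard.trans (hf.apply_card_filter_le_sum s' g hξ)) (by positivity) hpq
        exact mul_nonneg (div_nonneg (hf.pos one_pos).le (hf.pos hξ).le)
          (sum_nonneg fun t _ => hf.nonneg (abs_nonneg _))
    _ = f 1 / (f ξ * δ) * (1 / q * ∑ t ∈ s', f |g t|) := by field_simp

end IsModulus

theorem stmt15_general (f : ℝ → ℝ) (hf : IsUnboundedModulus f)
    (l m : ℕ → ℝ) (hl : MemLambda l) (hm : MemLambda m)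
    (n0 : ℕ) (hle : ∀ n ≥ n0, l n ≤ m n)
    (hinf : 0 < Filter.atTop.liminf (fun n : ℕ => f (l n) / f (m n)))
    (x : ℕ → ℝ) (L : ℝ)
    (hsum : Tendsto (fun n => (1 / f (m n)) * ∑ t ∈ Iseg m n, f (|x t - L|)) atTop (nhds 0)) :
    FLStatConv f l x L := by
  obtain ⟨hf, -⟩ := hf
  obtain ⟨δ, hδ, hlm⟩ := exists_pos_eventually_mul_le_of_liminf_div_pos
    (fun n => hf.nonneg (hl.pos n).le) (fun n => hf.pos (hm.pos n)) hinf
  intro ξ hξ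
  have key : ∀ᶠ n in atTop,
      f #((Iseg l n).filter fun t => ξ ≤ ‖x t - L‖) / f (l n) ≤
        f 1 / (f ξ * δ) * ((1 / f (m n)) * ∑ t ∈ Iseg m n, f |x t - L|) := by
    filter_upwards [hlm, eventually_ge_atTop n0] with n hδn hn
    exact hf.apply_card_filter_div_le (Iseg_subset_of_le (hle n hn)) (fun t => x t - L) hξ hδ
      (hf.pos (hm.pos n)) hδn
  refine squeeze_zero' (Eventually.of_forall fun n => ?_) key (by simpa using hsum.const_mul _)
  exact div_nonneg (hf.nonneg (Nat.cast_nonneg _)) (hf.pos (hl.pos n)).le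

theorem stmt15 (f : ℝ → ℝ) (hf : IsUnboundedModulus f)
    (c : ℝ) (hc : 0 < c) (hmul : ∀ x, 0 ≤ x → ∀ y, 0 ≤ y → c * (f x * f y) ≤ f (x * y))
    (l m : ℕ → ℝ) (hl : MemLambda l) (hm : MemLambda m)
    (n0 : ℕ) (hle : ∀ n ≥ n0, l n ≤ m n)
    (hinf : 0 < Filter.atTop.liminf (fun n : ℕ => f (l n) / f (m n)))
    (x : ℕ → ℝ) (L : ℝ)
    (hsum : Tendsto (fun n => (1 / f (m n)) * ∑ t ∈ Iseg m n, f (|x t - L|)) atTop (nhds 0)) :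
    FLStatConv f l x L :=
  stmt15_general f hf l m hl hm n0 hle hinf x L hsum
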